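/- For every n ∈ ℕ, the Jackson q-integral of the q-Frobenius–Euler polynomial over [0,1] satisfies ∫₀^1 H_{n,q}(u|λ) d_q u = (1/[n+1]_q) · ( H_{n+1,q}(1|λ) − H_{n+1,q}(λ) ). -/

import Mathlib

/-!
Substituting `x ↦ qx` in the generating function fixes `e_q(t)` and turns `e_q(xt)` into
`e_q(qxt) = e_q(xt) - (1 - q) x t e_q(xt)`. Cancelling the factor `e_q(t) - λ`, whose constant
term `1 - λ` is nonzero, gives the `q`-difference equation
`H_{n+1}(x) - H_{n+1}(qx) = (1 - q) [n+1]_q x H_n(x)`.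
The Jackson integral of `H_n` over `[0, 1]` is therefore a telescoping series whose partial sums
`H_{n+1}(1) - H_{n+1}(q^N)` tend to `H_{n+1}(1) - H_{n+1}(0)`.
-/

open Finset Polynomial

/-- The `q`-integer `[n]_q = (1 - q^n)/(1 - q)` viewed in `ℂ`. -/
noncomputable def qInt (q : ℝ) (n : ℕ) : ℂ := (1 - (q : ℂ) ^ n) / (1 - (q : ℂ))

/-- The `q`-factorial `[n]_q! = ∏_{j=1}^n [j]_q`. -/
noncomputable def qFact (q : ℝ) (n : ℕ) : ℂ := ∏ j ∈ Finset.range n, qInt q (j + 1)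

/-- The `q`-binomial coefficient `[n]_q!/([k]_q! [n-k]_q!)`. -/
noncomputable def qBinom (q : ℝ) (n k : ℕ) : ℂ := qFact q n / (qFact q k * qFact q (n - k))

/-- The formal `q`-exponential `e_q(t) = ∑ t^n/[n]_q!` in `ℂ[x][[t]]`. -/
noncomputable def qExp (q : ℝ) : PowerSeries (Polynomial ℂ) :=
  PowerSeries.mk fun n => Polynomial.C (1 / qFact q n)

/-- The formal series `e_q(xt) = ∑ x^n t^n/[n]_q!` in `ℂ[x][[t]]`. -/
noncomputable def qExpX (q : ℝ) : PowerSeries (Polynomial ℂ) :=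
  PowerSeries.mk fun n => Polynomial.C (1 / qFact q n) * Polynomial.X ^ n

/-- `H : ℕ → ℂ[x]` is the family of `q`-Frobenius-Euler polynomials `H_{n,q}(x|λ)`:
`(∑ H_n t^n/[n]_q!) ⬝ (e_q(t) - λ) = (1 - λ) e_q(xt)` in `ℂ[x][[t]]`. -/
def IsqFrobeniusEuler (q : ℝ) (lam : ℂ) (H : ℕ → Polynomial ℂ) : Prop :=
  (PowerSeries.mk fun n => Polynomial.C (1 / qFact q n) * H n) *
      (qExp q - PowerSeries.C (Polynomial.C lam)) =
    PowerSeries.C (Polynomial.C (1 - lam)) * qExpX q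

/-- The Jackson `q`-integral `∫₀^z p(u) d_q u = (1-q) z ∑_{a≥0} q^a p(q^a z)`. -/
noncomputable def jacksonIntegral (q : ℝ) (p : Polynomial ℂ) (z : ℂ) : ℂ :=
  (1 - (q : ℂ)) * z * ∑' a : ℕ, (q : ℂ) ^ a * p.eval ((q : ℂ) ^ a * z)

open Filter Topology

section QCalculus

variable {q : ℝ}

lemma qFact_succ (n : ℕ) : qFact q (n + 1) = qFact q n * qInt q (n + 1) :=
  prod_range_succ _ n

lemma one_sub_pow_ne_zero (hq : |q| < 1) {n : ℕ} (hn : n ≠ 0) : 1 - (q : ℂ) ^ n ≠ 0 := by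
  have hlt : ‖(q : ℂ) ^ n‖ < 1 := by
    rw [norm_pow, Complex.norm_real, Real.norm_eq_abs]
    exact pow_lt_one₀ (abs_nonneg q) hq hn
  intro h
  rw [sub_eq_zero] at h
  rw [← h, norm_one] at hlt
  exact lt_irrefl _ hlt

lemma qInt_ne_zero (hq : |q| < 1) {n : ℕ} (hn : n ≠ 0) : qInt q n ≠ 0 :=
  div_ne_zero (one_sub_pow_ne_zero hq hn) (by simpa using one_sub_pow_ne_zero hq one_ne_zero)

lemma qFact_ne_zero (hq : |q| < 1) (n : ℕ) : qFact q n ≠ 0 :=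
  prod_ne_zero_iff.2 fun j _ => qInt_ne_zero hq j.succ_ne_zero

lemma one_sub_mul_qInt (hq : q ≠ 1) (n : ℕ) :
    (1 - (q : ℂ)) * qInt q n = 1 - (q : ℂ) ^ n := by
  have : (1 : ℂ) - q ≠ 0 := sub_ne_zero.2 (by exact_mod_cast hq.symm)
  rw [qInt, mul_div_cancel₀ _ this]

lemma one_sub_pow_succ_div_qFact_succ (hq : |q| < 1) (n : ℕ) :
    (1 - (q : ℂ) ^ (n + 1)) / qFact q (n + 1) = (1 - q) / qFact q n := by
  rw [← one_sub_mul_qInt (abs_lt.1 hq).2.ne, qFact_succ,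
    mul_div_mul_right _ _ (qInt_ne_zero hq n.succ_ne_zero)]

lemma summable_pow_mul_eval_pow_mul {r : ℂ} (hr : ‖r‖ < 1) (p : ℂ[X]) (z : ℂ) :
    Summable fun a : ℕ => r ^ a * p.eval (r ^ a * z) := by
  have hexpand : ∀ a : ℕ, r ^ a * p.eval (r ^ a * z) =
      ∑ k ∈ p.support, p.coeff k * z ^ k * (r ^ (k + 1)) ^ a := by
    intro a
    rw [eval_eq_sum, Polynomial.sum, mul_sum]
    refine sum_congr rfl fun k _ => ?_
    ring
  simp_rw [hexpand]
  refine summable_sum fun k _ => Summable.mul_left (p.coeff k * z ^ k) ?_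
  refine summable_geometric_of_norm_lt_one (x := r ^ (k + 1)) ?_
  rw [norm_pow]
  exact pow_lt_one₀ (norm_nonneg r) hr k.succ_ne_zero

/-- The fundamental theorem of `q`-calculus. -/
theorem jacksonIntegral_eq_sub_eval (hq : |q| < 1) {p P : ℂ[X]}
    (hP : P - P.comp (C (q : ℂ) * X) = C (1 - (q : ℂ)) * X * p) (z : ℂ) :
    jacksonIntegral q p z = P.eval z - P.eval 0 := by
  have hnorm : ‖(q : ℂ)‖ < 1 := by rwa [Complex.norm_real, Real.norm_eq_abs]
  have hterm : ∀ a : ℕ, (1 - (q : ℂ)) * z * ((q : ℂ) ^ a * p.eval ((q : ℂ) ^ a * z)) =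
      P.eval ((q : ℂ) ^ a * z) - P.eval ((q : ℂ) ^ (a + 1) * z) := by
    intro a
    have h := congrArg (eval ((q : ℂ) ^ a * z)) hP
    simp only [eval_sub, eval_comp, eval_mul, eval_C, eval_X] at h
    rw [pow_succ', mul_assoc (q : ℂ), h]
    ring
  have hsum : HasSum (fun a : ℕ => P.eval ((q : ℂ) ^ a * z) - P.eval ((q : ℂ) ^ (a + 1) * z))
      (jacksonIntegral q p z) := by
    simp_rw [← hterm]
    exact ((summable_pow_mul_eval_pow_mul hnorm p z).hasSum).mul_left _
  have hpartial : Tendsto (fun N : ℕ => P.eval z - P.eval ((q : ℂ) ^ N * z)) atTop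
      (𝓝 (P.eval z - P.eval 0)) := by
    refine tendsto_const_nhds.sub ?_
    have := (tendsto_pow_atTop_nhds_zero_of_norm_lt_one hnorm).mul_const z
    rw [zero_mul] at this
    exact (P.continuous.tendsto 0).comp this
  refine tendsto_nhds_unique hsum.tendsto_sum_nat ?_
  simpa only [sum_range_sub', pow_zero, one_mul] using hpartial

/-- `F(x, t) ↦ F(qx, t)`. -/
noncomputable def qDilate (q : ℝ) : PowerSeries ℂ[X] →+* PowerSeries ℂ[X] :=
  PowerSeries.map (compRingHom (C (q : ℂ) * X))

noncomputable def qEGF (q : ℝ) (H : ℕ → ℂ[X]) : PowerSeries ℂ[X] :=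
  PowerSeries.mk fun n => C (1 / qFact q n) * H n

lemma coeff_qDilate (F : PowerSeries ℂ[X]) (n : ℕ) :
    PowerSeries.coeff n (qDilate q F) = (PowerSeries.coeff n F).comp (C (q : ℂ) * X) :=
  PowerSeries.coeff_map _ _ _

lemma qDilate_C (a : ℂ) : qDilate q (PowerSeries.C (C a)) = PowerSeries.C (C a) := by
  rw [qDilate, PowerSeries.map_C, coe_compRingHom_apply, C_comp]

lemma qDilate_qExp : qDilate q (qExp q) = qExp q := by
  ext n : 1
  rw [coeff_qDilate, qExp, PowerSeries.coeff_mk, C_comp]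

lemma qExpX_sub_qDilate (hq : |q| < 1) :
    qExpX q - qDilate q (qExpX q) =
      PowerSeries.C (C (1 - (q : ℂ)) * X) * PowerSeries.X * qExpX q := by
  ext (_ | n) : 1 <;> rw [map_sub, coeff_qDilate, mul_assoc, PowerSeries.coeff_C_mul]
  · simp [qExpX]
  · have h : 1 / qFact q (n + 1) - 1 / qFact q (n + 1) * (q : ℂ) ^ (n + 1) =
        (1 - q) * (1 / qFact q n) := by
      rw [mul_one_div, ← one_sub_pow_succ_div_qFact_succ hq n]
      ring
    have hC := congrArg (fun c => C c * X ^ (n + 1)) h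
    simp only [map_sub, map_mul] at hC
    simp only [PowerSeries.coeff_succ_X_mul, qExpX, PowerSeries.coeff_mk, mul_comp, C_comp,
      X_pow_comp, mul_pow, ← C_pow, C_sub]
    linear_combination hC

lemma constantCoeff_qExp_sub_C (lam : ℂ) :
    PowerSeries.constantCoeff (qExp q - PowerSeries.C (C lam)) = C (1 - lam) := by
  simp [qExp, qFact, ← PowerSeries.coeff_zero_eq_constantCoeff]

theorem IsqFrobeniusEuler.qEGF_sub_qDilate (hq : |q| < 1) {lam : ℂ} (hlam : lam ≠ 1)
    {H : ℕ → ℂ[X]} (hH : IsqFrobeniusEuler q lam H) :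
    qEGF q H - qDilate q (qEGF q H) =
      PowerSeries.C (C (1 - (q : ℂ)) * X) * PowerSeries.X * qEGF q H := by
  have hG : qExp q - PowerSeries.C (C lam) ≠ 0 := by
    intro h
    have h0 := constantCoeff_qExp_sub_C (q := q) lam
    rw [h, map_zero, eq_comm, C_eq_zero, sub_eq_zero] at h0
    exact hlam h0.symm
  have hF : qEGF q H * (qExp q - PowerSeries.C (C lam)) =
      PowerSeries.C (C (1 - lam)) * qExpX q := hH
  have hFq : qDilate q (qEGF q H) * (qExp q - PowerSeries.C (C lam)) =
      PowerSeries.C (C (1 - lam)) * qDilate q (qExpX q) := by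
    have h := congrArg (qDilate q) hF
    rwa [map_mul, map_mul, map_sub, qDilate_qExp, qDilate_C, qDilate_C] at h
  refine mul_right_cancel₀ hG ?_
  calc (qEGF q H - qDilate q (qEGF q H)) * (qExp q - PowerSeries.C (C lam))
      = PowerSeries.C (C (1 - lam)) * (qExpX q - qDilate q (qExpX q)) := by
        rw [sub_mul, hF, hFq, mul_sub]
    _ = PowerSeries.C (C (1 - (q : ℂ)) * X) * PowerSeries.X * qEGF q H *
          (qExp q - PowerSeries.C (C lam)) := by
        rw [qExpX_sub_qDilate hq, mul_assoc _ (qEGF q H), hF]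
        ring

theorem IsqFrobeniusEuler.sub_comp_succ (hq : |q| < 1) {lam : ℂ} (hlam : lam ≠ 1)
    {H : ℕ → ℂ[X]} (hH : IsqFrobeniusEuler q lam H) (n : ℕ) :
    H (n + 1) - (H (n + 1)).comp (C (q : ℂ) * X) =
      C (qInt q (n + 1)) * (C (1 - (q : ℂ)) * X * H n) := by
  have h := congrArg (PowerSeries.coeff (n + 1)) (hH.qEGF_sub_qDilate hq hlam)
  rw [map_sub, coeff_qDilate, mul_assoc, PowerSeries.coeff_C_mul,
    PowerSeries.coeff_succ_X_mul] at h
  simp only [qEGF, PowerSeries.coeff_mk, mul_comp, C_comp] at h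
  have hinv : C (qFact q (n + 1)) * C (1 / qFact q (n + 1)) = 1 := by
    rw [← C_mul, mul_one_div_cancel (qFact_ne_zero hq _), C_1]
  have hsucc : C (qFact q (n + 1)) * C (1 / qFact q n) = C (qInt q (n + 1)) := by
    rw [← C_mul, qFact_succ, mul_comm (qFact q n), mul_assoc,
      mul_one_div_cancel (qFact_ne_zero hq _), mul_one]
  linear_combination C (qFact q (n + 1)) * h
    - (H (n + 1) - (H (n + 1)).comp (C (q : ℂ) * X)) * hinv + C (1 - (q : ℂ)) * X * H n * hsucc

end QCalculus

/-- `∫₀^1 H_{n,q}(u|λ) d_q u = (1/[n+1]_q)(H_{n+1,q}(1|λ) - H_{n+1,q}(λ))`. -/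
theorem jacksonIntegral_qFrobeniusEuler_zero_one
    (q : ℝ) (hq0 : 0 < q) (hq1 : q < 1) (lam : ℂ) (hlam : lam ≠ 1)
    (H : ℕ → Polynomial ℂ) (hH : IsqFrobeniusEuler q lam H) (n : ℕ) :
    jacksonIntegral q (H n) 1 =
      (1 / qInt q (n + 1)) * ((H (n + 1)).eval 1 - (H (n + 1)).eval 0) := by
  have hq : |q| < 1 := abs_lt.2 ⟨by linarith, hq1⟩
  set P := C (1 / qInt q (n + 1)) * H (n + 1)
  have hP : P - P.comp (C (q : ℂ) * X) = C (1 - (q : ℂ)) * X * H n := by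
    rw [mul_comp, C_comp, ← mul_sub, hH.sub_comp_succ hq hlam n, ← mul_assoc, ← C_mul,
      one_div_mul_cancel (qInt_ne_zero hq n.succ_ne_zero), C_1, one_mul]
  rw [jacksonIntegral_eq_sub_eval hq hP, eval_mul, eval_mul, eval_C, eval_C, mul_sub]
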